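/- arXiv:1203.2902 — 6 statements merged into one kernel-verified Lean document; each statement's English description precedes it below -/
import Mathlib

section
/- Let K be a finitely generated abelian group and let χ₁, …, χ_m be elements of K. If the cone generated by χ₁⊗1, …, χ_m⊗1 in the rational vector space K_ℚ = K ⊗_ℤ ℚ (that is, the set of all nonnegative rational linear combinations of these elements) is a ℚ-linear subspace of K_ℚ (equivalently, is closed under negation), then the additive submonoid of K generated by χ₁, …, χ_m is a subgroup of K (i.e., it is closed under negation). -/
/-!
Write `χᵢ ⊗ 1` for the image of `χᵢ` in `K_ℚ`. If `-(χᵢ ⊗ 1)` lies in the cone, clearing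
denominators gives `N > 0` and `eⱼ ∈ ℕ` such that `N χᵢ + ∑ eⱼ χⱼ` dies in `K_ℚ`, i.e. is
torsion, say killed by `M > 0`. Then `-χᵢ = (MN - 1) χᵢ + ∑ M eⱼ χⱼ` lies in the submonoid,
and a submonoid containing the negatives of its generators is closed under negation.
-/

open scoped TensorProduct

theorem isOfFinAddOrder_of_one_tmul_eq_zero {K : Type*} [AddCommGroup K] {y : K}
    (h : (1 : ℚ) ⊗ₜ[ℤ] y = 0) : IsOfFinAddOrder y := by
  have : IsLocalizedModule (nonZeroDivisors ℤ) (TensorProduct.mk ℤ ℚ K 1) :=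
    (isLocalizedModule_iff_isBaseChange (nonZeroDivisors ℤ) ℚ _).mpr
      (TensorProduct.isBaseChange ℤ K ℚ)
  obtain ⟨s, hs⟩ :=
    (IsLocalizedModule.eq_zero_iff (nonZeroDivisors ℤ) (TensorProduct.mk ℤ ℚ K 1)).mp h
  exact isOfFinAddOrder_iff_zsmul_eq_zero.mpr ⟨s, nonZeroDivisors.coe_ne_zero s, hs⟩

theorem Rat.exists_nat_mul_eq_natCast {ι : Type*} [Fintype ι] (c : ι → ℚ) (hc : ∀ i, 0 ≤ c i) :
    ∃ N : ℕ, 0 < N ∧ ∃ e : ι → ℕ, ∀ i, (N : ℚ) * c i = e i := by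
  refine ⟨∏ i, (c i).den, Finset.prod_pos fun i _ => (c i).pos, ?_⟩
  have (i : ι) : ∃ n : ℕ, ((∏ j, (c j).den : ℕ) : ℚ) * c i = n := by
    obtain ⟨k, hk⟩ := Finset.dvd_prod_of_mem (fun j => (c j).den) (Finset.mem_univ i)
    refine ⟨k * (c i).num.toNat, ?_⟩
    rw [hk]
    have hnum : ((c i).num.toNat : ℚ) = (c i).num := by
      exact_mod_cast Int.toNat_of_nonneg (Rat.num_nonneg.mpr (hc i))
    push_cast
    rw [hnum, mul_comm _ (k : ℚ), mul_assoc, Rat.den_mul_eq_num]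
  choose e he using this
  exact ⟨e, he⟩

theorem exists_nsmul_add_sum_nsmul_eq_zero {V ι : Type*} [AddCommGroup V] [Module ℚ V]
    [Fintype ι] {u : V} {w : ι → V} {c : ι → ℚ} (hc : ∀ i, 0 ≤ c i) (hu : -u = ∑ i, c i • w i) :
    ∃ N : ℕ, 0 < N ∧ ∃ e : ι → ℕ, N • u + ∑ i, e i • w i = 0 := by
  obtain ⟨N, hN, e, he⟩ := Rat.exists_nat_mul_eq_natCast c hc
  refine ⟨N, hN, e, ?_⟩
  simp only [← Nat.cast_smul_eq_nsmul ℚ, ← he, mul_smul, ← Finset.smul_sum, ← hu, smul_neg,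
    add_neg_cancel]

theorem AddSubmonoid.neg_mem_of_isOfFinAddOrder_nsmul_add {G : Type*} [AddCommGroup G]
    {S : AddSubmonoid G} {x z : G} (hx : x ∈ S) (hz : z ∈ S) {n : ℕ} (hn : 0 < n)
    (h : IsOfFinAddOrder (n • x + z)) : -x ∈ S := by
  obtain ⟨m, hm, hmz⟩ := h.exists_nsmul_eq_zero
  have hmn : 1 ≤ m * n := Nat.one_le_iff_ne_zero.mpr (Nat.mul_ne_zero hm.ne' hn.ne')
  have : x + ((m * n - 1) • x + m • z) = 0 := by
    rw [← add_assoc, ← succ_nsmul', Nat.sub_add_cancel hmn, mul_nsmul', ← nsmul_add, hmz]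
  rw [neg_eq_of_add_eq_zero_right this]
  exact S.add_mem (S.nsmul_mem hx _) (S.nsmul_mem hz _)

theorem AddSubmonoid.neg_mem_closure_of_neg_mem {G : Type*} [AddCommGroup G] {s : Set G}
    (h : ∀ x ∈ s, -x ∈ closure s) {x : G} (hx : x ∈ closure s) : -x ∈ closure s :=
  closure_le.mpr (fun y hy => by simpa using h _ hy)
    ((mem_closure_neg s (-x)).mpr (by rwa [neg_neg]))

theorem submonoid_is_group_of_cone_is_subspace_general
    (K : Type*) [AddCommGroup K]
    (m : ℕ) (χ : Fin m → K)
    (cone : Set (ℚ ⊗[ℤ] K))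
    (hcone : cone = {x : ℚ ⊗[ℤ] K | ∃ c : Fin m → ℚ,
      (∀ i, 0 ≤ c i) ∧ x = ∑ i, c i • ((1 : ℚ) ⊗ₜ[ℤ] χ i)})
    (hsub : ∀ x ∈ cone, -x ∈ cone) :
    ∀ x ∈ AddSubmonoid.closure (Set.range χ),
      -x ∈ AddSubmonoid.closure (Set.range χ) := by
  intro x hx
  refine AddSubmonoid.neg_mem_closure_of_neg_mem ?_ hx
  rintro _ ⟨i, rfl⟩
  have hgen : (1 : ℚ) ⊗ₜ[ℤ] χ i ∈ cone := by
    rw [hcone]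
    exact ⟨Pi.single i 1, Pi.single_nonneg.mpr zero_le_one, by simp [Pi.single_apply]⟩
  obtain ⟨c, hc, hneg⟩ : ∃ c : Fin m → ℚ, (∀ j, 0 ≤ c j) ∧
      -((1 : ℚ) ⊗ₜ[ℤ] χ i) = ∑ j, c j • ((1 : ℚ) ⊗ₜ[ℤ] χ j) := by
    rw [hcone] at hsub hgen
    exact hsub _ hgen
  obtain ⟨N, hN, e, he⟩ := exists_nsmul_add_sum_nsmul_eq_zero hc hneg
  have hmem (j : Fin m) : χ j ∈ AddSubmonoid.closure (Set.range χ) :=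
    AddSubmonoid.subset_closure ⟨j, rfl⟩
  have hsum : ∑ j, e j • χ j ∈ AddSubmonoid.closure (Set.range χ) :=
    sum_mem fun j _ => nsmul_mem (hmem j) _
  refine AddSubmonoid.neg_mem_of_isOfFinAddOrder_nsmul_add (hmem i) hsum hN
    (isOfFinAddOrder_of_one_tmul_eq_zero ?_)
  simpa [TensorProduct.tmul_add, TensorProduct.tmul_sum] using he

/-- **Lemma (Lemel).** Let `K` be a finitely generated abelian group and
`χ₁, …, χ_m ∈ K`.  If the cone generated by the elements `χ_i ⊗ 1` in the
rational vector space `K_ℚ = ℚ ⊗_ℤ K` is closed under negation (equivalently,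
is a `ℚ`-linear subspace), then the additive submonoid of `K` generated by
`χ₁, …, χ_m` is closed under negation, i.e. is a subgroup of `K`. -/
theorem submonoid_is_group_of_cone_is_subspace
    (K : Type*) [AddCommGroup K] (hfg : AddGroup.FG K)
    (m : ℕ) (χ : Fin m → K)
    (cone : Set (ℚ ⊗[ℤ] K))
    (hcone : cone = {x : ℚ ⊗[ℤ] K | ∃ c : Fin m → ℚ,
      (∀ i, 0 ≤ c i) ∧ x = ∑ i, c i • ((1 : ℚ) ⊗ₜ[ℤ] χ i)})
    (hsub : ∀ x ∈ cone, -x ∈ cone) :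
    ∀ x ∈ AddSubmonoid.closure (Set.range χ),
      -x ∈ AddSubmonoid.closure (Set.range χ) :=
  submonoid_is_group_of_cone_is_subspace_general K m χ cone hcone hsub
end

section
/- Let a₁, …, a_m ∈ ℤ^r be integer weight vectors and let the torus (ℂˣ)^r act diagonally on ℂ^m by t · z = (t^{a_1} z_1, …, t^{a_m} z_m), where t^{a_i} = ∏_{j=1}^r t_j^{a_{ij}}. If for some v ∈ ℂ^m the orbit {t · v : t ∈ (ℂˣ)^r} is a closed subset of ℂ^m (with its standard topology), then the additive submonoid of ℤ^r generated by the active weights {a_i : v_i ≠ 0} is a subgroup of ℤ^r (i.e., it is closed under negation). -/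
/-!
If the orbit is closed, every additive functional `φ` on `ℤ^r` that is nonnegative on the active
weights vanishes on them: along the one-parameter subgroup `s ↦ exp (s φ)` the point `v` tends,
as `s → -∞`, to the vector obtained by killing the coordinates with `φ (a i) > 0`; this limit
lies in the closed orbit, whose points all have the support of `v`. By Farkas' lemma over `ℚ`,
`-a k` then lies in the rational cone spanned by the active weights, and clearing denominators
puts `N • (-a k)` in the monoid for some `N > 0`, hence also `-a k = N • (-a k) + (N - 1) • a k`.
-/

open Filter Topology

namespace PointedCone

variable {𝕜 V ι : Type*} [Field 𝕜] [LinearOrder 𝕜] [IsStrictOrderedRing 𝕜]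
  [AddCommGroup V] [Module 𝕜 V]

theorem mem_hull_image_or_exists_dual_neg (s : Finset ι) (A : ι → V) (b : V) :
    b ∈ hull 𝕜 (A '' s) ∨ ∃ y : Module.Dual 𝕜 V, (∀ i ∈ s, 0 ≤ y (A i)) ∧ y b < 0 := by
  classical
  induction s using Finset.induction_on generalizing A b with
  | empty =>
    by_cases hb : b = 0
    · exact .inl (hb ▸ zero_mem _)
    obtain ⟨y, hy⟩ := Module.Projective.exists_dual_ne_zero 𝕜 hb
    rcases hy.lt_or_gt with hneg | hpos
    · exact .inr ⟨y, by simp, hneg⟩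
    · exact .inr ⟨-y, by simp, by simpa using hpos⟩
  | insert i s _ ih =>
    have hsub : A '' s ⊆ A '' ↑(insert i s) := Set.image_mono (by simp)
    obtain hb | ⟨y, hy, hyb⟩ := ih A b
    · exact .inl (Submodule.span_mono hsub hb)
    by_cases hyi : 0 ≤ y (A i)
    · exact .inr ⟨y, Finset.forall_mem_insert _ _ _ |>.2 ⟨hyi, hy⟩, hyb⟩
    replace hyi := not_le.1 hyi
    -- Fourier–Motzkin step: project along `A i` onto `ker y` and recurse.
    set P : V → V := fun x => x - (y x / y (A i)) • A i with hP
    have hAi : A i ∈ hull 𝕜 (A '' ↑(insert i s)) := subset_hull ⟨i, by simp, rfl⟩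
    obtain hb' | ⟨w, hw, hwb⟩ := ih (P ∘ A) (P b)
    · refine .inl ?_
      have hle : hull 𝕜 ((P ∘ A) '' s) ≤ hull 𝕜 (A '' ↑(insert i s)) := by
        refine Submodule.span_le.2 ?_
        rintro _ ⟨j, hj, rfl⟩
        have hc : 0 ≤ -(y (A j) / y (A i)) :=
          neg_nonneg.2 (div_nonpos_of_nonneg_of_nonpos (hy j hj) hyi.le)
        have hPAj : P (A j) = A j + (-(y (A j) / y (A i))) • A i := by
          simp [hP, sub_eq_add_neg]
        simp only [Function.comp_apply, hPAj]
        exact add_mem (subset_hull ⟨j, by simp [hj], rfl⟩) (smul_mem _ hc hAi)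
      have hbP : b = P b + (y b / y (A i)) • A i := by simp [hP]
      rw [hbP]
      exact add_mem (hle hb') (smul_mem _ (div_nonneg_of_nonpos hyb.le hyi.le) hAi)
    · have hwP : ∀ x, (w - (w (A i) / y (A i)) • y) x = w (P x) := by
        intro x
        simp only [LinearMap.sub_apply, LinearMap.smul_apply, smul_eq_mul, hP, map_sub, map_smul]
        ring
      refine .inr ⟨w - (w (A i) / y (A i)) • y, ?_, by rw [hwP]; exact hwb⟩
      refine Finset.forall_mem_insert _ _ _ |>.2 ⟨?_, fun j hj => (hwP _).symm ▸ hw j hj⟩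
      simp [div_mul_cancel₀ _ hyi.ne]

end PointedCone

theorem exists_nsmul_mem_closure_of_mem_hull {M V : Type*} [AddCommMonoid M] [AddCommGroup V]
    [Module ℚ V] (f : M →+ V) {S : Set M} {x : V} (hx : x ∈ PointedCone.hull ℚ (f '' S)) :
    ∃ N : ℕ, 0 < N ∧ ∃ w ∈ AddSubmonoid.closure S, N • x = f w := by
  induction hx using Submodule.span_induction with
  | mem x hx =>
    obtain ⟨u, hu, rfl⟩ := hx
    exact ⟨1, one_pos, u, AddSubmonoid.subset_closure hu, one_nsmul _⟩
  | zero => exact ⟨1, one_pos, 0, zero_mem _, by simp⟩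
  | add x y _ _ hx hy =>
    obtain ⟨N₁, hN₁, w₁, hw₁, hx⟩ := hx
    obtain ⟨N₂, hN₂, w₂, hw₂, hy⟩ := hy
    refine ⟨N₁ * N₂, Nat.mul_pos hN₁ hN₂, N₂ • w₁ + N₁ • w₂,
      add_mem (nsmul_mem hw₁ _) (nsmul_mem hw₂ _), ?_⟩
    rw [map_add, map_nsmul, map_nsmul, ← hx, ← hy]
    module
  | smul c x _ hx =>
    obtain ⟨q, hq⟩ := c
    obtain ⟨N, hN, w, hw, hx⟩ := hx
    refine ⟨q.den * N, Nat.mul_pos q.den_pos hN, q.num.toNat • w, nsmul_mem hw _, ?_⟩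
    have hnum : ((q.num.toNat : ℕ) : ℚ) = q.den * q := by
      rw [mul_comm, Rat.mul_den_eq_num, ← Int.cast_natCast,
        Int.toNat_of_nonneg (Rat.num_nonneg.2 hq)]
    rw [map_nsmul, ← hx, Nonneg.mk_smul]
    simp only [← Nat.cast_smul_eq_nsmul ℚ, smul_smul, hnum]
    push_cast
    ring_nf

theorem neg_mem_closure_of_forall_nonneg_imp_eq_zero {ι : Type*} {S : Set (ι → ℤ)}
    (hS : S.Finite) (h : ∀ φ : (ι → ℤ) →+ ℚ, (∀ w ∈ S, 0 ≤ φ w) → ∀ w ∈ S, φ w = 0) :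
    ∀ x ∈ AddSubmonoid.closure S, -x ∈ AddSubmonoid.closure S := by
  classical
  set C := AddSubmonoid.closure S
  suffices hgen : ∀ w ∈ S, -w ∈ C by
    intro x hx
    induction hx using AddSubmonoid.closure_induction with
    | mem w hw => exact hgen w hw
    | zero => simp
    | add x y _ _ hx hy => simpa [add_comm] using add_mem hx hy
  intro w hw
  let f : (ι → ℤ) →+ (ι → ℚ) := (Int.castAddHom ℚ).compLeft ι
  obtain hcone | ⟨y, hy, hyw⟩ :=
    PointedCone.mem_hull_image_or_exists_dual_neg (𝕜 := ℚ) hS.toFinset f (-f w)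
  · obtain ⟨N, hN, u, hu, hNu⟩ :=
      exists_nsmul_mem_closure_of_mem_hull f (S := S) (by simpa using hcone)
    obtain ⟨k, rfl⟩ := Nat.exists_eq_add_one_of_ne_zero hN.ne'
    have hfinj : Function.Injective f := Int.cast_injective.comp_left
    have hu' : (k + 1) • -w = u := hfinj (by rw [map_nsmul, map_neg]; exact hNu)
    have : -w = (k + 1) • -w + k • w := by module
    rw [this, hu']
    exact add_mem hu (nsmul_mem (AddSubmonoid.subset_closure hw) _)
  · have hyfw : y (f w) = 0 :=
      h (y.toAddMonoidHom.comp f) (fun u hu => hy u (by simpa using hu)) w hw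
    simp [hyfw] at hyw

section TorusOrbit

variable {κ ι : Type*} [Fintype ι]

def torusOrbit (a : κ → ι → ℤ) (v : κ → ℂ) : Set (κ → ℂ) :=
  {z | ∃ t : ι → ℂˣ, z = fun i => ((∏ j, t j ^ a i j : ℂˣ) : ℂ) * v i}

theorem apply_ne_zero_of_mem_torusOrbit {a : κ → ι → ℤ} {v : κ → ℂ} {z : κ → ℂ}
    (hz : z ∈ torusOrbit a v) {i : κ} (hi : v i ≠ 0) : z i ≠ 0 := by
  obtain ⟨t, rfl⟩ := hz
  exact mul_ne_zero (Units.ne_zero _) hi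

noncomputable def expOneParamSubgroup [DecidableEq ι] (φ : (ι → ℤ) →+ ℝ) (s : ℝ) : ι → ℂˣ :=
  fun j => Units.mk0 (Complex.exp ((s * φ (Pi.single j 1) : ℝ) : ℂ)) (Complex.exp_ne_zero _)

theorem coe_prod_expOneParamSubgroup_zpow [DecidableEq ι] (φ : (ι → ℤ) →+ ℝ) (s : ℝ) (w : ι → ℤ) :
    ((∏ j, expOneParamSubgroup φ s j ^ w j : ℂˣ) : ℂ) = Complex.exp ((s * φ w : ℝ) : ℂ) := by
  conv_rhs => rw [pi_eq_sum_univ' w, map_sum, Finset.mul_sum, Complex.ofReal_sum, Complex.exp_sum]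
  push_cast [expOneParamSubgroup, Units.coe_prod, Units.val_zpow_eq_zpow_val, Units.val_mk0]
  refine Finset.prod_congr rfl fun j _ => ?_
  rw [← Complex.exp_int_mul, map_zsmul]
  push_cast
  ring_nf

theorem exp_mul_mem_torusOrbit (a : κ → ι → ℤ) (v : κ → ℂ) (φ : (ι → ℤ) →+ ℝ) (s : ℝ) :
    (fun i => Complex.exp ((s * φ (a i) : ℝ) : ℂ) * v i) ∈ torusOrbit a v := by
  classical
  exact ⟨expOneParamSubgroup φ s, by simp only [coe_prod_expOneParamSubgroup_zpow]⟩

theorem tendsto_exp_mul_atBot_nhds_zero {c : ℝ} (hc : 0 < c) :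
    Tendsto (fun s : ℝ => Complex.exp ((s * c : ℝ) : ℂ)) atBot (𝓝 0) := by
  simp_rw [← Complex.ofReal_exp]
  rw [← Complex.ofReal_zero]
  exact (Complex.continuous_ofReal.tendsto 0).comp
    (Real.tendsto_exp_atBot.comp (tendsto_id.atBot_mul_const hc))

theorem map_eq_zero_of_isClosed_torusOrbit {a : κ → ι → ℤ} {v : κ → ℂ}
    (hclosed : IsClosed (torusOrbit a v)) {φ : (ι → ℤ) →+ ℝ}
    (hφ : ∀ i, v i ≠ 0 → 0 ≤ φ (a i)) {k : κ} (hk : v k ≠ 0) : φ (a k) = 0 := by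
  classical
  set z : κ → ℂ := fun i => if φ (a i) = 0 then v i else 0
  have hlim : Tendsto (fun s : ℝ => fun i => Complex.exp ((s * φ (a i) : ℝ) : ℂ) * v i)
      atBot (𝓝 z) := by
    refine tendsto_pi_nhds.2 fun i => ?_
    by_cases hvi : v i = 0
    · simp [z, hvi]
    by_cases hφi : φ (a i) = 0
    · simp [z, hφi]
    simpa [z, hφi] using (tendsto_exp_mul_atBot_nhds_zero
      ((hφ i hvi).lt_of_ne' hφi)).mul_const (v i)
  have hz : z ∈ torusOrbit a v :=
    hclosed.mem_of_tendsto hlim (.of_forall (exp_mul_mem_torusOrbit a v φ))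
  by_contra hφk
  exact apply_ne_zero_of_mem_torusOrbit hz hk (by simp [z, hφk])

end TorusOrbit

/-- If the orbit of `v ∈ ℂ^m` under the diagonal linear action of `(ℂˣ)^r`
with integer weight vectors `a₁, …, a_m ∈ ℤ^r` is closed, then the additive
submonoid of `ℤ^r` generated by the active weights (those `a_i` with
`v_i ≠ 0`) is closed under negation, i.e. is a subgroup of `ℤ^r`. -/
theorem active_weights_semigroup_is_group_of_orbit_closed
    (r m : ℕ) (a : Fin m → Fin r → ℤ) (v : Fin m → ℂ)
    (orbit : Set (Fin m → ℂ))
    (horbit : orbit = {z : Fin m → ℂ | ∃ t : Fin r → ℂˣ,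
      z = fun i => ((∏ j, t j ^ a i j : ℂˣ) : ℂ) * v i})
    (hclosed : IsClosed orbit) :
    ∀ x ∈ AddSubmonoid.closure {w : Fin r → ℤ | ∃ i, v i ≠ 0 ∧ w = a i},
      -x ∈ AddSubmonoid.closure {w : Fin r → ℤ | ∃ i, v i ≠ 0 ∧ w = a i} := by
  subst horbit
  have hfin : {w : Fin r → ℤ | ∃ i, v i ≠ 0 ∧ w = a i}.Finite :=
    (Set.finite_range a).subset fun _ ⟨i, _, hw⟩ => ⟨i, hw.symm⟩
  refine neg_mem_closure_of_forall_nonneg_imp_eq_zero hfin fun φ hφ => ?_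
  rintro _ ⟨k, hk, rfl⟩
  let ψ : (Fin r → ℤ) →+ ℝ := (Rat.castHom ℝ).toAddMonoidHom.comp φ
  have hψ : ∀ i, v i ≠ 0 → 0 ≤ ψ (a i) := fun i hi => by
    simpa [ψ] using hφ _ ⟨i, hi, rfl⟩
  simpa [ψ] using map_eq_zero_of_isClosed_torusOrbit (a := a) hclosed hψ hk
end

section
/- Let v₀, v₁, …, v_m ∈ ℤ^n (m ≥ 0, n ≥ 1). Assume: (i) v₀ is primitive; (ii) the cone C ⊆ ℚ^n generated by v₀, v₁, …, v_m is pointed, i.e., C ∩ (−C) = {0}; (iii) v₀ does not lie in the cone generated by v₁, …, v_m. Then there exists a group homomorphism e : ℤ^n → ℤ such that e(v₀) = −1 and e(v_i) ≥ 0 for all i = 1, …, m. (In other words, every extremal ray of a pointed rational polyhedral cone admits a Demazure root.) -/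
/-!
Choose `g ∈ ℤⁿ` with `g ⬝ᵥ v₀ = 1` (Bézout) and project along `v₀`: `wᵢ = vᵢ - (g ⬝ᵥ vᵢ) v₀`.
Since the cone is pointed and `v₀` is not in the cone of the `vᵢ`, a nonnegative combination of
the `vᵢ` lying on the line `ℚ v₀` only involves zero generators; hence `0` is not in the convex
hull of the nonzero `wᵢ`. Separating (Hahn–Banach over `ℝ`, rational approximation, clearing
denominators) gives `q ∈ ℤⁿ` with `q ⬝ᵥ wᵢ > 0` for these `wᵢ`. Then `H = q - (q ⬝ᵥ v₀) g`
vanishes at `v₀` and is positive at every nonzero `vᵢ`, and `e = T H - g ⬝ᵥ ·` works for `T` large.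
-/

open Matrix

theorem Int.cast_comp_dotProduct {ι R : Type*} [Fintype ι] [Ring R] (a b : ι → ℤ) :
    (Int.cast ∘ a : ι → R) ⬝ᵥ Int.cast ∘ b = ((a ⬝ᵥ b : ℤ) : R) :=
  (RingHom.map_dotProduct (Int.castRingHom R) a b).symm

theorem Rat.cast_comp_dotProduct {ι K : Type*} [Fintype ι] [DivisionRing K] [CharZero K]
    (a b : ι → ℚ) : (Rat.cast ∘ a : ι → K) ⬝ᵥ Rat.cast ∘ b = ((a ⬝ᵥ b : ℚ) : K) :=
  (RingHom.map_dotProduct (Rat.castHom K) a b).symm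

section OrderedField

variable {K E ι : Type*} [Field K] [LinearOrder K] [IsStrictOrderedRing K]
  [AddCommGroup E] [Module K E] [Fintype ι]

theorem exists_weights_of_mem_convexHull_image {z : ι → E} {A : Set ι} {x : E}
    (hx : x ∈ convexHull K (z '' A)) :
    ∃ t : ι → K, (∀ i, 0 ≤ t i) ∧ ∑ i, t i = 1 ∧ (∀ i, 0 < t i → i ∈ A) ∧
      ∑ i, t i • z i = x := by
  classical
  refine convexHull_min (t := {y | ∃ t : ι → K, (∀ i, 0 ≤ t i) ∧ ∑ i, t i = 1 ∧
    (∀ i, 0 < t i → i ∈ A) ∧ ∑ i, t i • z i = y}) ?_ ?_ hx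
  · rintro _ ⟨i, hi, rfl⟩
    refine ⟨Pi.single i 1, fun j => ?_, by simp, fun j hj => ?_, by simp [Pi.single_apply]⟩
    · by_cases h : j = i <;> simp [h]
    · by_cases h : j = i
      · exact h ▸ hi
      · simp [h] at hj
  · rintro _ ⟨t, ht₀, ht₁, htA, rfl⟩ _ ⟨t', ht₀', ht₁', htA', rfl⟩ a b ha hb hab
    refine ⟨a • t + b • t', fun i => ?_, ?_, fun i hi => ?_, ?_⟩
    · simp only [Pi.add_apply, Pi.smul_apply, smul_eq_mul]
      exact add_nonneg (mul_nonneg ha (ht₀ i)) (mul_nonneg hb (ht₀' i))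
    · simp [Finset.sum_add_distrib, ← Finset.mul_sum, ht₁, ht₁', hab]
    · simp only [Pi.add_apply, Pi.smul_apply, smul_eq_mul] at hi
      by_contra hiA
      have := not_lt.mp (mt (htA i) hiA)
      have := not_lt.mp (mt (htA' i) hiA)
      nlinarith
    · simp [add_smul, Finset.sum_add_distrib, Finset.smul_sum, smul_smul]

theorem smul_eq_zero_of_sum_smul_eq_smul {C : Set E} {v₀ : E} {v : ι → E}
    (hC : ∀ (c₀ : K) (c : ι → K), 0 ≤ c₀ → (∀ i, 0 ≤ c i) → c₀ • v₀ + ∑ i, c i • v i ∈ C)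
    (hpointed : ∀ x ∈ C, -x ∈ C → x = 0)
    (hextremal : ¬ ∃ c : ι → K, (∀ i, 0 ≤ c i) ∧ v₀ = ∑ i, c i • v i)
    {t : ι → K} (ht : ∀ i, 0 ≤ t i) {s : K} (hts : ∑ i, t i • v i = s • v₀) (i : ι) :
    t i • v i = 0 := by
  classical
  rcases lt_or_ge 0 s with hs | hs
  · refine (hextremal ⟨fun i => s⁻¹ * t i, fun i => mul_nonneg (inv_nonneg.mpr hs.le) (ht i),
      ?_⟩).elim
    simp_rw [mul_smul, ← Finset.smul_sum, hts, smul_smul, inv_mul_cancel₀ hs.ne', one_smul]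
  · apply hpointed
    · simpa [Pi.single_apply, ite_smul] using hC 0 (Pi.single i (t i)) le_rfl fun j => by
        by_cases h : j = i <;> simp [h, ht]
    · convert hC (-s) (t - Pi.single i (t i)) (neg_nonneg.mpr hs) (fun j => by
        by_cases h : j = i <;> simp [h, ht]) using 1
      simp [sub_smul, Finset.sum_sub_distrib, hts, Pi.single_apply, ite_smul]
      abel

end OrderedField

theorem exists_rat_sum_smul_eq_of_real {ι κ : Type*} [Fintype ι] [Fintype κ]
    (u : κ → ι → ℚ) (b : ι → ℚ)
    (h : ∃ x : κ → ℝ, ∑ k, x k • (Rat.cast ∘ u k : ι → ℝ) = Rat.cast ∘ b) :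
    ∃ y : κ → ℚ, ∑ k, y k • u k = b := by
  classical
  by_contra hb
  rw [← Submodule.mem_span_range_iff_exists_fun] at hb
  obtain ⟨f, hfb, hf⟩ := Submodule.exists_dual_map_eq_bot_of_notMem hb inferInstance
  obtain ⟨ρ, rfl⟩ := (dotProductEquiv ℚ ι).surjective f
  have hρu (k : κ) : ρ ⬝ᵥ u k = 0 := by
    have := Submodule.mem_map_of_mem (f := dotProductEquiv ℚ ι ρ)
      (Submodule.subset_span (Set.mem_range_self k) : u k ∈ Submodule.span ℚ (Set.range u))
    rw [hf, Submodule.mem_bot] at this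
    simpa using this
  obtain ⟨x, hx⟩ := h
  apply hfb
  have : ((ρ ⬝ᵥ b : ℚ) : ℝ) = 0 := by
    rw [← Rat.cast_comp_dotProduct, ← hx]
    simp [dotProduct_sum, dotProduct_smul, Rat.cast_comp_dotProduct, hρu]
  simpa using this

theorem mem_convexHull_of_ratCast_mem_convexHull {ι : Type*} [Fintype ι]
    {s : Set (ι → ℚ)} {p : ι → ℚ}
    (hp : (Rat.cast ∘ p : ι → ℝ) ∈ convexHull ℝ ((Rat.cast ∘ ·) '' s)) :
    p ∈ convexHull ℚ s := by
  obtain ⟨κ, _, z, w, hzs, hz, hw₀, hw₁, hwz⟩ := eq_pos_convex_span_of_mem_convexHull hp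
  choose x hxs hxz using fun k => hzs (Set.mem_range_self k)
  -- Appending the coordinate `1` turns the affine conditions into one linear system.
  obtain ⟨y, hy⟩ := exists_rat_sum_smul_eq_of_real (fun k => Sum.elim (x k) (1 : Unit → ℚ))
    (Sum.elim p 1) ⟨w, by
      ext (j | _)
      · simpa [Finset.sum_apply, ← hxz] using congrFun hwz j
      · simpa using hw₁⟩
  have hyp : ∑ k, y k • x k = p := by
    ext j
    simpa [Finset.sum_apply] using congrFun hy (Sum.inl j)
  have hy₁ : ∑ k, y k = 1 := by simpa [Finset.sum_apply] using congrFun hy (Sum.inr ())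
  have hy₁' : ∑ k, (Rat.cast ∘ y) k = (1 : ℝ) := by
    simpa using congrArg (Rat.cast : ℚ → ℝ) hy₁
  -- Carathéodory makes the real weights unique, so they are the rational ones.
  have hwy : w = Rat.cast ∘ y := by
    refine (affineIndependent_iff_eq_of_fintype_affineCombination_eq ℝ z).mp hz _ _ hw₁ hy₁' ?_
    rw [Finset.affineCombination_eq_linear_combination _ _ _ hw₁,
      Finset.affineCombination_eq_linear_combination _ _ _ hy₁', hwz]
    ext j
    simpa [Finset.sum_apply, ← hxz] using (congrArg (Rat.cast : ℚ → ℝ) (congrFun hyp j)).symm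
  refine mem_convexHull_of_exists_fintype y x (fun k => ?_) hy₁ hxs hyp
  have : (0 : ℝ) < y k := by simpa [hwy] using hw₀ k
  exact_mod_cast this.le

theorem exists_dotProduct_pos_of_zero_notMem_convexHull {ι : Type*} [Fintype ι]
    {s : Set (ι → ℚ)} (hs : s.Finite) (h₀ : 0 ∉ convexHull ℚ s) :
    ∃ q : ι → ℚ, ∀ x ∈ s, 0 < q ⬝ᵥ x := by
  classical
  have h₀' : 0 ∉ convexHull ℝ ((Rat.cast ∘ ·) '' s : Set (ι → ℝ)) := fun h =>
    h₀ (mem_convexHull_of_ratCast_mem_convexHull (by simpa using h))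
  obtain ⟨f, u, hfu, hf⟩ := geometric_hahn_banach_point_closed (convex_convexHull ℝ _)
    ((hs.image _).isClosed_convexHull ℝ) h₀'
  obtain ⟨g, hg⟩ := (dotProductEquiv ℝ ι).surjective (f : (ι → ℝ) →ₗ[ℝ] ℝ)
  have hg₀ (x : ι → ℚ) (hx : x ∈ s) : 0 < g ⬝ᵥ Rat.cast ∘ x := by
    have hfx : g ⬝ᵥ Rat.cast ∘ x = f (Rat.cast ∘ x) := LinearMap.congr_fun hg _
    linarith [hf _ (subset_convexHull ℝ _ ⟨x, hx, rfl⟩), map_zero f]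
  -- Strict separation is an open condition, and rational vectors are dense.
  have hopen : IsOpen {y : ι → ℝ | ∀ x ∈ s, 0 < y ⬝ᵥ Rat.cast ∘ x} := by
    simp_rw [Set.ofPred_forall]
    exact hs.isOpen_biInter fun x _ =>
      isOpen_lt continuous_const (continuous_id.dotProduct continuous_const)
  obtain ⟨q, hq⟩ :=
    (DenseRange.piMap fun _ => Rat.denseRange_cast).exists_mem_open hopen ⟨g, hg₀⟩
  refine ⟨q, fun x hx => ?_⟩
  have : (0 : ℝ) < Rat.cast ∘ q ⬝ᵥ Rat.cast ∘ x := hq x hx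
  rw [Rat.cast_comp_dotProduct] at this
  exact_mod_cast this

theorem exists_pos_nat_mul_eq_intCast {ι : Type*} [Fintype ι] (q : ι → ℚ) :
    ∃ N : ℕ, 0 < N ∧ ∃ H : ι → ℤ, ∀ j, (H j : ℚ) = N * q j := by
  refine ⟨∏ j, (q j).den, Finset.prod_pos fun j _ => (q j).pos, ?_⟩
  choose d hd using fun j => Finset.dvd_prod_of_mem (fun j => (q j).den) (Finset.mem_univ j)
  refine ⟨fun j => d j * (q j).num, fun j => ?_⟩
  rw [hd j]
  push_cast
  rw [← Rat.mul_den_eq_num]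
  ring

theorem exists_int_dotProduct_pos_of_pointed {ι κ : Type*} [Fintype ι] [Fintype κ]
    (z : κ → ι → ℤ)
    (hz : ∀ t : κ → ℚ, (∀ k, 0 ≤ t k) → ∑ k, t k • (Int.cast ∘ z k : ι → ℚ) = 0 →
      ∀ k, 0 < t k → z k = 0) :
    ∃ H : ι → ℤ, ∀ k, z k ≠ 0 → 0 < H ⬝ᵥ z k := by
  have h₀ : 0 ∉ convexHull ℚ ((fun k => (Int.cast ∘ z k : ι → ℚ)) '' {k | z k ≠ 0}) := by
    intro h
    obtain ⟨t, ht₀, ht₁, htA, htz⟩ := exists_weights_of_mem_convexHull_image h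
    obtain ⟨k, -, hk⟩ := Finset.exists_lt_of_sum_lt (s := Finset.univ) (f := 0) (g := t)
      (by simp [ht₁])
    exact htA k hk (hz t ht₀ htz k hk)
  obtain ⟨q, hq⟩ := exists_dotProduct_pos_of_zero_notMem_convexHull (Set.toFinite _) h₀
  obtain ⟨N, hN, H, hH⟩ := exists_pos_nat_mul_eq_intCast q
  refine ⟨H, fun k hk => ?_⟩
  have : ((H ⬝ᵥ z k : ℤ) : ℚ) = N * (q ⬝ᵥ Int.cast ∘ z k) := by
    rw [← Int.cast_comp_dotProduct, ← smul_eq_mul, ← smul_dotProduct]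
    congr 1
    ext j
    simp [hH]
  exact_mod_cast this ▸ mul_pos (Nat.cast_pos.mpr hN) (hq _ ⟨k, hk, rfl⟩)

theorem AddMonoidHom.exists_apply_eq_neg_one_and_nonneg {M ι : Type*} [AddCommGroup M]
    [Fintype ι] {v₀ : M} {v : ι → M} (ℓ Q : M →+ ℤ) (hℓ : ℓ v₀ = 1)
    (hQ : ∀ i, v i ≠ 0 → 0 < Q (v i - ℓ (v i) • v₀)) :
    ∃ e : M →+ ℤ, e v₀ = -1 ∧ ∀ i, 0 ≤ e (v i) := by
  set H := Q - Q v₀ • ℓ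
  have hH (i : ι) : H (v i) = Q (v i - ℓ (v i) • v₀) := by simp [H, mul_comm]
  set T := ∑ i, |ℓ (v i)|
  refine ⟨T • H - ℓ, by simp [H, hℓ], fun i => ?_⟩
  by_cases hi : v i = 0
  · simp [hi]
  have hT : |ℓ (v i)| ≤ T := Finset.single_le_sum (f := fun i => |ℓ (v i)|)
    (fun j _ => abs_nonneg _) (Finset.mem_univ i)
  have hTH : T ≤ T * H (v i) :=
    le_mul_of_one_le_right ((abs_nonneg _).trans hT) (hH i ▸ hQ i hi)
  simp only [AddMonoidHom.sub_apply, AddMonoidHom.smul_apply, smul_eq_mul, sub_nonneg]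
  linarith [le_abs_self (ℓ (v i))]

theorem exists_demazure_root_general
    (n m : ℕ)
    (v₀ : Fin n → ℤ) (v : Fin m → Fin n → ℤ)
    (hprim : Finset.univ.gcd v₀ = 1)
    (C : Set (Fin n → ℚ))
    (hC : C = {x : Fin n → ℚ | ∃ (c₀ : ℚ) (c : Fin m → ℚ),
      0 ≤ c₀ ∧ (∀ i, 0 ≤ c i) ∧
      x = c₀ • (fun j => ((v₀ j : ℚ))) + ∑ i, c i • fun j => ((v i j : ℚ))})
    (hpointed : ∀ x ∈ C, -x ∈ C → x = 0)
    (hextremal : ¬ ∃ c : Fin m → ℚ, (∀ i, 0 ≤ c i) ∧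
      (fun j => ((v₀ j : ℚ))) = ∑ i, c i • fun j => ((v i j : ℚ))) :
    ∃ e : (Fin n → ℤ) →+ ℤ, e v₀ = -1 ∧ ∀ i, 0 ≤ e (v i) := by
  subst hC
  obtain ⟨g, hg⟩ : ∃ g : Fin n → ℤ, g ⬝ᵥ v₀ = 1 := by
    obtain ⟨g, hg⟩ := Finset.univ.gcd_eq_sum_mul v₀
    exact ⟨g, by rw [dotProduct_comm, dotProduct, ← hg, hprim]⟩
  set w : Fin m → Fin n → ℤ := fun i => v i - (g ⬝ᵥ v i) • v₀ with hw
  have hv_eq_zero (t : Fin m → ℚ) (ht : ∀ i, 0 ≤ t i)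
      (htw : ∑ i, t i • (Int.cast ∘ w i : Fin n → ℚ) = 0) (i : Fin m) (hti : 0 < t i) :
      v i = 0 := by
    have hv (i : Fin m) : (fun j => (v i j : ℚ)) =
        Int.cast ∘ w i + ((g ⬝ᵥ v i : ℤ) : ℚ) • fun j => (v₀ j : ℚ) := by
      ext j
      simp [hw]
    have := smul_eq_zero_of_sum_smul_eq_smul (fun c₀ c h₀ hc => by exact ⟨c₀, c, h₀, hc, rfl⟩)
      hpointed hextremal ht (s := ∑ i, t i * (g ⬝ᵥ v i)) (by
        simp_rw [hv, smul_add, Finset.sum_add_distrib, htw, zero_add, smul_smul,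
          Finset.sum_smul]) i
    ext j
    simpa [hti.ne'] using congrFun this j
  obtain ⟨q, hq⟩ := exists_int_dotProduct_pos_of_pointed w fun t ht htw i hti => by
    simp [hw, hv_eq_zero t ht htw i hti]
  refine AddMonoidHom.exists_apply_eq_neg_one_and_nonneg
    (dotProductEquiv ℤ (Fin n) g).toAddMonoidHom (dotProductEquiv ℤ (Fin n) q).toAddMonoidHom
    (by simpa using hg) fun i hi => ?_
  have hwi : w i ≠ 0 := fun h => hi <|
    hv_eq_zero (Pi.single i 1) (Pi.single_nonneg.mpr zero_le_one) (by simp [h]) i (by simp)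
  exact hq i hwi

/-- Existence of a Demazure root at an extremal ray of a pointed rational
polyhedral cone: if `v₀ ∈ ℤ^n` is primitive, the cone generated by
`v₀, v₁, …, v_m` in `ℚ^n` is pointed, and `v₀` does not lie in the cone
generated by `v₁, …, v_m`, then there is a group homomorphism
`e : ℤ^n → ℤ` with `e(v₀) = -1` and `e(v_i) ≥ 0` for `i = 1, …, m`. -/
theorem exists_demazure_root
    (n m : ℕ) (hn : 1 ≤ n)
    (v₀ : Fin n → ℤ) (v : Fin m → Fin n → ℤ)
    (hprim : Finset.univ.gcd v₀ = 1)
    (C : Set (Fin n → ℚ))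
    (hC : C = {x : Fin n → ℚ | ∃ (c₀ : ℚ) (c : Fin m → ℚ),
      0 ≤ c₀ ∧ (∀ i, 0 ≤ c i) ∧
      x = c₀ • (fun j => ((v₀ j : ℚ))) + ∑ i, c i • fun j => ((v i j : ℚ))})
    (hpointed : ∀ x ∈ C, -x ∈ C → x = 0)
    (hextremal : ¬ ∃ c : Fin m → ℚ, (∀ i, 0 ≤ c i) ∧
      (fun j => ((v₀ j : ℚ))) = ∑ i, c i • fun j => ((v i j : ℚ))) :
    ∃ e : (Fin n → ℤ) →+ ℤ, e v₀ = -1 ∧ ∀ i, 0 ≤ e (v i) :=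
  exists_demazure_root_general n m v₀ v hprim C hC hpointed hextremal
end

section
/- Let n ≥ 2 and let v₀, v₁, …, v_m ∈ ℤ^n (m ≥ 0). Assume: (i) v₀ is primitive; (ii) the cone C ⊆ ℚ^n generated by v₀, v₁, …, v_m is pointed, i.e., C ∩ (−C) = {0}; (iii) v₀ does not lie in the cone generated by v₁, …, v_m. Then the set of group homomorphisms e : ℤ^n → ℤ satisfying e(v₀) = −1 and e(v_i) ≥ 0 for all i = 1, …, m is infinite. (In other words, for n ≥ 2 the set ℛ_τ of Demazure roots associated with a fixed extremal ray τ of a pointed rational polyhedral cone is infinite.) -/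
/-!
Farkas' lemma over an ordered field (by Fourier–Motzkin elimination) yields, from pointedness, a
functional positive on every nonzero generator, and, from `v₀ ∉ cone(v₁, …, v_m)`, one negative on
`v₀` and nonnegative on the `vᵢ`. A suitable combination of the two vanishes on `v₀` and is positive
on every nonzero `vᵢ`; clearing denominators makes it an integral functional `q`. Primitivity of
`v₀` gives `u` with `u v₀ = 1`, and `N • q - u` is a Demazure root for `N` large. Adding nonnegative
multiples of `q` — or, when `q = 0` (so all `vᵢ = 0`), of a nonzero functional vanishing on `v₀`,
which exists as `n ≥ 2` — gives infinitely many.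
-/

open Finset Module

section Cones

variable {K V ι : Type*} [Semiring K] [PartialOrder K] [AddCommMonoid V] [Module K V] [Fintype ι]

variable (K) in
def finiteCone (w : ι → V) : Set V :=
  {x | ∃ c : ι → K, (∀ i, 0 ≤ c i) ∧ x = ∑ i, c i • w i}

lemma zero_mem_finiteCone (w : ι → V) : 0 ∈ finiteCone K w :=
  ⟨0, fun _ => le_rfl, by simp⟩

lemma mem_finiteCone_self [ZeroLEOneClass K] [DecidableEq ι] (w : ι → V) (i : ι) :
    w i ∈ finiteCone K w :=
  ⟨Pi.single i 1, fun j => by by_cases h : j = i <;> simp [h], by simp [Pi.single_apply]⟩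

lemma mem_finiteCone_cons {m : ℕ} {w₀ x : V} {w : Fin m → V} :
    x ∈ finiteCone K (Fin.cons w₀ w : Fin (m + 1) → V) ↔
      ∃ c₀ : K, ∃ c : Fin m → K, 0 ≤ c₀ ∧ (∀ i, 0 ≤ c i) ∧ x = c₀ • w₀ + ∑ i, c i • w i := by
  constructor
  · rintro ⟨c, hc, rfl⟩
    exact ⟨c 0, Fin.tail c, hc 0, fun i => hc i.succ, by simp [Fin.sum_univ_succ, Fin.tail]⟩
  · rintro ⟨c₀, c, hc₀, hc, rfl⟩
    exact ⟨Fin.cons c₀ c, fun i => Fin.cases hc₀ hc i, by simp [Fin.sum_univ_succ]⟩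

lemma finiteCone_subset_cons {m : ℕ} (w₀ : V) (w : Fin m → V) :
    finiteCone K w ⊆ finiteCone K (Fin.cons w₀ w : Fin (m + 1) → V) := by
  rintro x ⟨c, hc, rfl⟩
  exact mem_finiteCone_cons.mpr ⟨0, c, le_rfl, hc, by simp⟩

end Cones

section Farkas

variable {K V : Type*} [Field K] [LinearOrder K] [IsStrictOrderedRing K]
  [AddCommGroup V] [Module K V]

theorem exists_dual_neg_of_notMem_finiteCone {m : ℕ} {w : Fin m → V} {b : V}
    (hb : b ∉ finiteCone K w) : ∃ φ : Dual K V, φ b < 0 ∧ ∀ i, 0 ≤ φ (w i) := by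
  induction m generalizing b with
  | zero =>
    have hb₀ : b ≠ 0 := fun h => hb (h ▸ zero_mem_finiteCone w)
    obtain ⟨φ, hφ⟩ := Projective.exists_dual_eq_one K hb₀
    exact ⟨-φ, by simp [hφ], finZeroElim⟩
  | succ m ih =>
    rw [← Fin.cons_self_tail w] at hb ⊢
    set w₀ := w 0
    set w' := Fin.tail w
    obtain ⟨φ, hφb, hφw⟩ := ih fun h => hb (finiteCone_subset_cons w₀ w' h)
    obtain hφ₀ | hφ₀ := le_or_gt 0 (φ w₀)
    · exact ⟨φ, hφb, fun i => Fin.cases hφ₀ hφw i⟩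
    -- Eliminate `w₀`: were `π b` in the cone of the `π (w' i)`, `b` would be in the cone of `w`.
    let π : V →ₗ[K] V := LinearMap.id - (φ w₀)⁻¹ • φ.smulRight w₀
    have hπ : ∀ x, π x = x - ((φ w₀)⁻¹ * φ x) • w₀ := fun x => by simp [π, mul_smul]
    have hπb : π b ∉ finiteCone K (π ∘ w') := by
      rintro ⟨c, hc, hcb⟩
      set s := ∑ i, c i • w' i
      have hπs : π (b - s) = 0 := by simp [s, hcb, map_sum]
      have hφs : 0 ≤ φ s := by
        simpa [s, map_sum] using sum_nonneg fun i _ => mul_nonneg (hc i) (hφw i)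
      refine hb (mem_finiteCone_cons.mpr ⟨(φ w₀)⁻¹ * φ (b - s), c, ?_, hc, ?_⟩)
      · rw [map_sub]
        exact mul_nonneg_of_nonpos_of_nonpos (inv_nonpos.mpr hφ₀.le) (by linarith)
      · rw [hπ, sub_eq_zero] at hπs
        rw [← hπs, sub_add_cancel]
    obtain ⟨ψ, hψb, hψw⟩ := ih hπb
    refine ⟨ψ ∘ₗ π, hψb, fun i => Fin.cases ?_ hψw i⟩
    simp [hπ, hφ₀.ne]

theorem exists_dual_pos_of_pointed {m : ℕ} {w : Fin m → V}
    (hw : ∀ x ∈ finiteCone K w, -x ∈ finiteCone K w → x = 0) :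
    ∃ φ : Dual K V, ∀ i, w i ≠ 0 → 0 < φ (w i) := by
  have key : ∀ i, ∃ φ : Dual K V, (w i ≠ 0 → 0 < φ (w i)) ∧ ∀ j, 0 ≤ φ (w j) := by
    intro i
    by_cases hi : w i = 0
    · exact ⟨0, fun h => absurd hi h, fun _ => le_rfl⟩
    · obtain ⟨φ, hφ, hφw⟩ := exists_dual_neg_of_notMem_finiteCone
        fun h => hi (hw _ (mem_finiteCone_self w i) h)
      exact ⟨φ, fun _ => by simpa using hφ, hφw⟩
  choose φ hφ hφw using key
  refine ⟨∑ i, φ i, fun i hi => ?_⟩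
  rw [LinearMap.sum_apply]
  exact sum_pos' (fun j _ => hφw j i) ⟨i, mem_univ i, hφ i hi⟩

theorem exists_dual_exposing_of_pointed {m : ℕ} {w₀ : V} {w : Fin m → V}
    (hpointed : ∀ x ∈ finiteCone K (Fin.cons w₀ w : Fin (m + 1) → V),
      -x ∈ finiteCone K (Fin.cons w₀ w : Fin (m + 1) → V) → x = 0)
    (hw₀ : w₀ ∉ finiteCone K w) :
    ∃ ψ : Dual K V, ψ w₀ = 0 ∧ ∀ i, w i ≠ 0 → 0 < ψ (w i) := by
  obtain ⟨φ, hφ⟩ := exists_dual_pos_of_pointed hpointed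
  obtain ⟨χ, hχ₀, hχ⟩ := exists_dual_neg_of_notMem_finiteCone hw₀
  have hφ₀ : 0 < φ w₀ := by
    have hw₀' : w₀ ≠ 0 := fun h => hw₀ (h ▸ zero_mem_finiteCone w)
    simpa using hφ 0 (by simpa using hw₀')
  refine ⟨φ w₀ • χ - χ w₀ • φ, by simp [mul_comm], fun i hi => ?_⟩
  have hφi : 0 < φ (w i) := by simpa using hφ i.succ (by simpa using hi)
  have := mul_nonneg hφ₀.le (hχ i)
  have := mul_pos (neg_pos.mpr hχ₀) hφi
  simp only [LinearMap.sub_apply, LinearMap.smul_apply, smul_eq_mul]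
  linarith

end Farkas

section DemazureRoots

variable {M ι : Type*} [AddCommGroup M]

def demazureRoots (w₀ : M) (w : ι → M) : Set (M →+ ℤ) :=
  {e | e w₀ = -1 ∧ ∀ i, 0 ≤ e (w i)}

lemma demazureRoots_nonempty [Fintype ι] {w₀ : M} {w : ι → M} {u q : M →+ ℤ}
    (hu : u w₀ = 1) (hq₀ : q w₀ = 0) (hq : ∀ i, w i ≠ 0 → 0 < q (w i)) :
    (demazureRoots w₀ w).Nonempty := by
  set N := ∑ i, |u (w i)|
  refine ⟨N • q - u, by simp [hq₀, hu], fun i => ?_⟩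
  by_cases hi : w i = 0
  · simp [hi]
  have hN : |u (w i)| ≤ N := single_le_sum (fun j _ => abs_nonneg (u (w j))) (mem_univ i)
  have : N * 1 ≤ N * q (w i) := mul_le_mul_of_nonneg_left (hq i hi) ((abs_nonneg _).trans hN)
  simp only [AddMonoidHom.sub_apply, AddMonoidHom.smul_apply, smul_eq_mul]
  linarith [le_abs_self (u (w i))]

lemma demazureRoots_infinite {w₀ : M} {w : ι → M} {e f : M →+ ℤ}
    (he : e ∈ demazureRoots w₀ w) (hf : f ≠ 0) (hf₀ : f w₀ = 0) (hfw : ∀ i, 0 ≤ f (w i)) :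
    (demazureRoots w₀ w).Infinite := by
  obtain ⟨x, hx⟩ := DFunLike.ne_iff.mp hf
  refine Set.infinite_of_injective_forall_mem (f := fun k : ℕ => e + k • f)
    (fun k l hkl => ?_) (fun k => ⟨by simp [he.1, hf₀], fun i => ?_⟩)
  · exact (by simpa using congrArg (· x) hkl : k = l ∨ f x = 0).resolve_right hx
  · simpa using add_nonneg (he.2 i) (nsmul_nonneg (hfw i) k)

end DemazureRoots

section IntegralFunctionals

variable {ι : Type*}

lemma exists_ne_zero_addMonoidHom_apply_eq_zero [Nontrivial ι] (x : ι → ℤ) :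
    ∃ g : (ι → ℤ) →+ ℤ, g ≠ 0 ∧ g x = 0 := by
  classical
  obtain ⟨a, b, hab⟩ := exists_pair_ne ι
  let ev : ι → (ι → ℤ) →+ ℤ := Pi.evalAddMonoidHom (fun _ => ℤ)
  by_cases hxa : x a = 0
  · exact ⟨ev a, DFunLike.ne_iff.mpr ⟨Pi.single a 1, by simp [ev]⟩, hxa⟩
  · refine ⟨x b • ev a - x a • ev b, DFunLike.ne_iff.mpr ⟨Pi.single b 1, ?_⟩, ?_⟩
    · simp [ev, hab, hxa]
    · simp [ev, mul_comm]

variable [Fintype ι]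

def dotProductAddMonoidHom (c : ι → ℤ) : (ι → ℤ) →+ ℤ :=
  AddMonoidHom.mk' (c ⬝ᵥ ·) (dotProduct_add c)

lemma exists_addMonoidHom_apply_eq_one {x : ι → ℤ} (hx : univ.gcd x = 1) :
    ∃ u : (ι → ℤ) →+ ℤ, u x = 1 := by
  obtain ⟨c, hc⟩ := Finset.gcd_eq_sum_mul univ x
  exact ⟨dotProductAddMonoidHom c, by simp [dotProductAddMonoidHom, dotProduct, ← hx, hc, mul_comm]⟩

lemma exists_addMonoidHom_intCast_eq_mul (ψ : Dual ℚ (ι → ℚ)) :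
    ∃ N : ℕ, 0 < N ∧ ∃ e : (ι → ℤ) →+ ℤ, ∀ x, (e x : ℚ) = N * ψ (fun j => (x j : ℚ)) := by
  classical
  set y := (dotProductEquiv ℚ ι).symm ψ
  have hψ : ∀ x, ψ x = y ⬝ᵥ x := fun x => by
    rw [← (dotProductEquiv ℚ ι).apply_symm_apply ψ]; rfl
  refine ⟨∏ j, (y j).den, prod_pos fun j _ => (y j).den_pos,
    dotProductAddMonoidHom fun j => (∏ i ∈ univ.erase j, (y i).den : ℕ) * (y j).num, fun x => ?_⟩
  simp only [dotProductAddMonoidHom, AddMonoidHom.mk'_apply, hψ, dotProduct, mul_sum]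
  push_cast
  refine sum_congr rfl fun j _ => ?_
  rw [← prod_erase_mul univ _ (mem_univ j), ← Rat.mul_den_eq_num]
  ring

end IntegralFunctionals

/-- For `n ≥ 2`, the set `ℛ_τ` of Demazure roots associated with a fixed
extremal ray `τ = ℚ_{≥0} v₀` of a pointed rational polyhedral cone generated
by `v₀, v₁, …, v_m ∈ ℤ^n` (with `v₀` primitive) is infinite. -/
theorem demazure_roots_infinite
    (n m : ℕ) (hn : 2 ≤ n)
    (v₀ : Fin n → ℤ) (v : Fin m → Fin n → ℤ)
    (hprim : Finset.univ.gcd v₀ = 1)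
    (C : Set (Fin n → ℚ))
    (hC : C = {x : Fin n → ℚ | ∃ (c₀ : ℚ) (c : Fin m → ℚ),
      0 ≤ c₀ ∧ (∀ i, 0 ≤ c i) ∧
      x = c₀ • (fun j => ((v₀ j : ℚ))) + ∑ i, c i • fun j => ((v i j : ℚ))})
    (hpointed : ∀ x ∈ C, -x ∈ C → x = 0)
    (hextremal : ¬ ∃ c : Fin m → ℚ, (∀ i, 0 ≤ c i) ∧
      (fun j => ((v₀ j : ℚ))) = ∑ i, c i • fun j => ((v i j : ℚ))) :
    {e : (Fin n → ℤ) →+ ℤ | e v₀ = -1 ∧ ∀ i, 0 ≤ e (v i)}.Infinite := by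
  have hC' : C = finiteCone ℚ (Fin.cons (fun j => (v₀ j : ℚ)) fun i j => (v i j : ℚ)) := by
    ext x; rw [hC, Set.mem_ofPred_eq, mem_finiteCone_cons]
  obtain ⟨ψ, hψ₀, hψ⟩ := exists_dual_exposing_of_pointed (hC' ▸ hpointed) hextremal
  obtain ⟨N, hN, q, hq⟩ := exists_addMonoidHom_intCast_eq_mul ψ
  have hq₀ : q v₀ = 0 := by exact_mod_cast (hq v₀).trans (by rw [hψ₀, mul_zero] : _ = (0 : ℚ))
  have hqv : ∀ i, v i ≠ 0 → 0 < q (v i) := fun i hi => by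
    have hi' : (fun j => (v i j : ℚ)) ≠ 0 := fun h =>
      hi (funext fun j => by simpa using congrFun h j)
    exact_mod_cast (hq (v i)).symm ▸ mul_pos (Nat.cast_pos.mpr hN) (hψ i hi')
  obtain ⟨u, hu⟩ := exists_addMonoidHom_apply_eq_one hprim
  obtain ⟨e, he⟩ := demazureRoots_nonempty hu hq₀ hqv
  obtain ⟨f, hf, hf₀, hfv⟩ : ∃ f : (Fin n → ℤ) →+ ℤ, f ≠ 0 ∧ f v₀ = 0 ∧ ∀ i, 0 ≤ f (v i) := by
    by_cases hq0 : q = 0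
    · have : Nontrivial (Fin n) := Fin.nontrivial_iff_two_le.mpr hn
      obtain ⟨g, hg, hg₀⟩ := exists_ne_zero_addMonoidHom_apply_eq_zero v₀
      refine ⟨g, hg, hg₀, fun i => ?_⟩
      have hvi : v i = 0 := by simpa [hq0] using mt (hqv i)
      simp [hvi]
    · exact ⟨q, hq0, hq₀, fun i => by by_cases hi : v i = 0 <;> simp [hi, (hqv i _).le]⟩
  exact demazureRoots_infinite he hf hf₀ hfv
end

section
/- Let v₀, v₁, …, v_m ∈ ℤ^n (m ≥ 0, n ≥ 1). Assume the cone C ⊆ ℚ^n generated by v₀, v₁, …, v_m is pointed, i.e., C ∩ (−C) = {0}, and that v₀ does not lie in the cone generated by v₁, …, v_m. Then there exists a group homomorphism u : ℤ^n → ℤ such that u(v₀) = 0, u(v_i) ≥ 0 for all i = 1, …, m, and u(v_i) > 0 for every i ∈ {1, …, m} with v_i ∉ ℚ_{≥0}·v₀. (A supporting integral linear functional exposing the extremal ray ℚ_{≥0} v₀ of the pointed cone C.) -/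
/-!
For each generator `w i` off the ray through `w₀`, apply Farkas' lemma in `V ⧸ K ∙ w₀` to `-w i`
and the generators. A nonnegative representation of `-w i` modulo `w₀` is impossible: if the
coefficient of `w₀` is nonnegative then `± w i` both lie in the cone, contradicting pointedness,
and if it is negative then `w₀` lies in the cone of the `w j`. So some functional vanishes on `w₀`,
is nonnegative on every `w j` and positive on `w i`. The sum of these functionals exposes the ray,
and clearing its denominators makes it integral.
-/

open Module

theorem exists_nonneg_sum_insert_eq {R M ι : Type*} [Semiring R] [PartialOrder R]
    [AddCommMonoid M] [Module R M] [DecidableEq ι] {s : Finset ι} {a : ι} (ha : a ∉ s)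
    {c : ι → R} (hc : ∀ i ∈ s, 0 ≤ c i) {t : R} (ht : 0 ≤ t) (w : ι → M) :
    ∃ c' : ι → R, (∀ i ∈ insert a s, 0 ≤ c' i) ∧
      ∑ i ∈ insert a s, c' i • w i = t • w a + ∑ i ∈ s, c i • w i := by
  have update_eq {i : ι} (hi : i ∈ s) : Function.update c a t i = c i :=
    Function.update_of_ne (ne_of_mem_of_not_mem hi ha) _ _
  refine ⟨Function.update c a t, (Finset.forall_mem_insert _ _ _).2 ⟨by simpa, ?_⟩, ?_⟩
  · exact fun i hi => (update_eq hi).symm ▸ hc i hi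
  · rw [Finset.sum_insert ha, Function.update_self]
    exact congrArg _ (Finset.sum_congr rfl fun i hi => by rw [update_eq hi])

section OrderedField

variable {K V : Type*} [Field K] [AddCommGroup V] [Module K V]

lemma preReflection_inv_smul_self {u : Dual K V} {a : V} (ha : u a ≠ 0) :
    preReflection ((u a)⁻¹ • a) u a = 0 := by
  simp [preReflection_apply, ha]

lemma preReflection_inv_smul_add (u : Dual K V) (a x : V) :
    preReflection ((u a)⁻¹ • a) u x + ((u a)⁻¹ * u x) • a = x := by
  rw [preReflection_apply, mul_comm, mul_smul]; abel

variable (K) in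
def coneGeneratedBy [LE K] {ι : Type*} [Fintype ι] (w₀ : V) (w : ι → V) : Set V :=
  {x | ∃ (c₀ : K) (c : ι → K), 0 ≤ c₀ ∧ (∀ i, 0 ≤ c i) ∧ x = c₀ • w₀ + ∑ i, c i • w i}

variable [LinearOrder K] [IsStrictOrderedRing K]

/-- Farkas' lemma. -/
theorem exists_nonneg_combination_or_exists_separating_dual {ι : Type*} (s : Finset ι)
    (w : ι → V) (b : V) :
    (∃ c : ι → K, (∀ i ∈ s, 0 ≤ c i) ∧ ∑ i ∈ s, c i • w i = b) ∨
      ∃ u : Dual K V, (∀ i ∈ s, 0 ≤ u (w i)) ∧ u b < 0 := by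
  classical
  induction s using Finset.induction_on generalizing w b with
  | empty =>
    by_cases hb : b = 0
    · exact .inl ⟨0, by simp, by simp [hb]⟩
    · obtain ⟨f, hf⟩ := Projective.exists_dual_eq_one K hb
      exact .inr ⟨-f, by simp, by simp [hf]⟩
  | insert a s ha ih =>
    rcases ih w b with ⟨c, hc, rfl⟩ | ⟨u, hu, hub⟩
    · obtain ⟨c', hc', hsum⟩ := exists_nonneg_sum_insert_eq ha hc le_rfl w
      exact .inl ⟨c', hc', by rw [hsum, zero_smul, zero_add]⟩
    by_cases hua : 0 ≤ u (w a)
    · exact .inr ⟨u, (Finset.forall_mem_insert _ _ _).2 ⟨hua, hu⟩, hub⟩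
    rw [not_le] at hua
    -- Fourier–Motzkin: eliminate `w a` by projecting along it onto `ker u`.
    set P := preReflection ((u (w a))⁻¹ • w a) u
    rcases ih (P ∘ w) (P b) with ⟨c, hc, hcb⟩ | ⟨u', hu', hub'⟩
    · set z := ∑ i ∈ s, c i • w i
      have hz : P (b - z) = 0 := by simp [z, map_sub, map_sum, ← hcb]
      have hbz := preReflection_inv_smul_add u (w a) (b - z)
      rw [hz, zero_add] at hbz
      have ht : 0 ≤ (u (w a))⁻¹ * u (b - z) := by
        refine mul_nonneg_of_nonpos_of_nonpos (inv_nonpos.2 hua.le) ?_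
        have huz : 0 ≤ u z := by
          simpa [z, map_sum] using Finset.sum_nonneg fun i hi => mul_nonneg (hc i hi) (hu i hi)
        rw [map_sub]; linarith
      obtain ⟨c', hc', hsum⟩ := exists_nonneg_sum_insert_eq ha hc ht w
      exact .inl ⟨c', hc', by rw [hsum, hbz, sub_add_cancel]⟩
    · refine .inr ⟨u' ∘ₗ P, (Finset.forall_mem_insert _ _ _).2 ⟨?_, hu'⟩, hub'⟩
      simp [P, preReflection_inv_smul_self hua.ne]

variable {ι : Type*} [Fintype ι] {w₀ : V} {w : ι → V}

lemma apply_mem_coneGeneratedBy (i : ι) : w i ∈ coneGeneratedBy K w₀ w := by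
  classical
  exact ⟨0, Pi.single i 1, le_rfl, Pi.single_nonneg.2 zero_le_one,
    by simp [Pi.single_apply, ite_smul]⟩

theorem exists_dual_pos_of_not_on_ray
    (hpointed : ∀ x ∈ coneGeneratedBy K w₀ w, -x ∈ coneGeneratedBy K w₀ w → x = 0)
    (hextremal : ¬ ∃ c : ι → K, (∀ i, 0 ≤ c i) ∧ w₀ = ∑ i, c i • w i)
    {i : ι} (hi : ¬ ∃ q : K, 0 ≤ q ∧ w i = q • w₀) :
    ∃ u : Dual K V, u w₀ = 0 ∧ (∀ j, 0 ≤ u (w j)) ∧ 0 < u (w i) := by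
  classical
  set π := (K ∙ w₀).mkQ
  rcases exists_nonneg_combination_or_exists_separating_dual (K := K) Finset.univ (π ∘ w)
    (-π (w i)) with ⟨c, hc, hcb⟩ | ⟨u, hu, hui⟩
  · exfalso
    obtain ⟨t, ht⟩ : ∃ t : K, t • w₀ = -w i - ∑ j, c j • w j := by
      rw [← Submodule.mem_span_singleton, ← Submodule.Quotient.mk_eq_zero, ← Submodule.mkQ_apply,
        map_sub, map_neg, ← hcb, map_sum]
      simp [π]
    have hneg : -w i = t • w₀ + ∑ j, c j • w j := by rw [ht, sub_add_cancel]
    rcases le_or_gt 0 t with ht₀ | ht₀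
    · have hwi := hpointed _ (apply_mem_coneGeneratedBy i)
        ⟨t, c, ht₀, fun j => hc j (Finset.mem_univ j), hneg⟩
      exact hi ⟨0, le_rfl, by rw [hwi, zero_smul]⟩
    · have hd : 0 ≤ c + (Pi.single i 1 : ι → K) := add_nonneg (fun j => hc j (Finset.mem_univ j))
        (Pi.single_nonneg.2 zero_le_one)
      refine hextremal ⟨(-t)⁻¹ • (c + (Pi.single i 1 : ι → K)), fun j => ?_, ?_⟩
      · exact smul_nonneg (inv_nonneg.2 (neg_nonneg.2 ht₀.le)) (hd j)
      · have hsingle : ∑ j, (Pi.single i 1 : ι → K) j • w j = w i := by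
          simp [Pi.single_apply, ite_smul]
        simp only [Pi.smul_apply, Pi.add_apply, smul_eq_mul, mul_smul, add_smul, ← Finset.smul_sum,
          Finset.sum_add_distrib, hsingle]
        have hsum : ∑ j, c j • w j + w i = (-t) • w₀ := by rw [neg_smul, ht]; abel
        rw [hsum, smul_smul, inv_mul_cancel₀ (neg_ne_zero.2 ht₀.ne), one_smul]
  · have hπ : π w₀ = 0 := (Submodule.Quotient.mk_eq_zero _).2 (Submodule.mem_span_singleton_self w₀)
    exact ⟨u ∘ₗ π, by simp [hπ], fun j => hu j (Finset.mem_univ j), by simpa using hui⟩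

theorem exists_dual_exposing_ray
    (hpointed : ∀ x ∈ coneGeneratedBy K w₀ w, -x ∈ coneGeneratedBy K w₀ w → x = 0)
    (hextremal : ¬ ∃ c : ι → K, (∀ i, 0 ≤ c i) ∧ w₀ = ∑ i, c i • w i) :
    ∃ u : Dual K V, u w₀ = 0 ∧ (∀ i, 0 ≤ u (w i)) ∧
      ∀ i, (¬ ∃ q : K, 0 ≤ q ∧ w i = q • w₀) → 0 < u (w i) := by
  classical
  have exposing (i : ι) : ∃ u : Dual K V, u w₀ = 0 ∧ (∀ j, 0 ≤ u (w j)) ∧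
      ((¬ ∃ q : K, 0 ≤ q ∧ w i = q • w₀) → 0 < u (w i)) := by
    by_cases hi : ∃ q : K, 0 ≤ q ∧ w i = q • w₀
    · exact ⟨0, rfl, fun _ => le_rfl, absurd hi⟩
    · obtain ⟨u, hu₀, hu, hui⟩ := exists_dual_pos_of_not_on_ray hpointed hextremal hi
      exact ⟨u, hu₀, hu, fun _ => hui⟩
  choose U hU₀ hU hUpos using exposing
  refine ⟨∑ k, U k, by simp [hU₀], fun i => ?_, fun i hi => ?_⟩
  · simpa using Finset.sum_nonneg fun k _ => hU k i
  · simpa using Finset.sum_pos' (fun k _ => hU k i) ⟨i, Finset.mem_univ i, hUpos i hi⟩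

end OrderedField

theorem Rat.exists_pos_nat_mul_eq_int {ι : Type*} [Fintype ι] (q : ι → ℚ) :
    ∃ N : ℕ, 0 < N ∧ ∀ i, ∃ a : ℤ, (a : ℚ) = N * q i := by
  refine ⟨∏ i, (q i).den, Finset.prod_pos fun i _ => (q i).den_pos, fun i => ?_⟩
  obtain ⟨k, hk⟩ := Finset.dvd_prod_of_mem (fun i => (q i).den) (Finset.mem_univ i)
  refine ⟨(q i).num * k, ?_⟩
  push_cast [hk]
  rw [← Rat.mul_den_eq_num]
  ring

theorem exists_addMonoidHom_int_cast_eq_mul {ι : Type*} [Fintype ι] (u : Dual ℚ (ι → ℚ)) :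
    ∃ (f : (ι → ℤ) →+ ℤ) (N : ℕ), 0 < N ∧ ∀ x : ι → ℤ, (f x : ℚ) = N * u (fun j => (x j : ℚ)) := by
  classical
  set q := (dotProductEquiv ℚ ι).symm u
  have hu : u = dotProductEquiv ℚ ι q := ((dotProductEquiv ℚ ι).apply_symm_apply u).symm
  obtain ⟨N, hN, ha⟩ := Rat.exists_pos_nat_mul_eq_int q
  choose a ha using ha
  refine ⟨(dotProductEquiv ℤ ι a).toAddMonoidHom, N, hN, fun x => ?_⟩
  rw [hu]
  simp [dotProduct, ha, Finset.mul_sum, mul_assoc]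

theorem exists_supporting_functional_general
    (n m : ℕ)
    (v₀ : Fin n → ℤ) (v : Fin m → Fin n → ℤ)
    (C : Set (Fin n → ℚ))
    (hC : C = {x : Fin n → ℚ | ∃ (c₀ : ℚ) (c : Fin m → ℚ),
      0 ≤ c₀ ∧ (∀ i, 0 ≤ c i) ∧
      x = c₀ • (fun j => ((v₀ j : ℚ))) + ∑ i, c i • fun j => ((v i j : ℚ))})
    (hpointed : ∀ x ∈ C, -x ∈ C → x = 0)
    (hextremal : ¬ ∃ c : Fin m → ℚ, (∀ i, 0 ≤ c i) ∧
      (fun j => ((v₀ j : ℚ))) = ∑ i, c i • fun j => ((v i j : ℚ))) :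
    ∃ u : (Fin n → ℤ) →+ ℤ, u v₀ = 0 ∧ (∀ i, 0 ≤ u (v i)) ∧
      ∀ i, (¬ ∃ q : ℚ, 0 ≤ q ∧
        (fun j => ((v i j : ℚ))) = q • fun j => ((v₀ j : ℚ))) →
        0 < u (v i) := by
  subst hC
  obtain ⟨u, hu₀, hu, hu_pos⟩ := exists_dual_exposing_ray (w₀ := fun j => (v₀ j : ℚ))
    (w := fun i j => (v i j : ℚ)) hpointed hextremal
  obtain ⟨f, N, hN, hf⟩ := exists_addMonoidHom_int_cast_eq_mul u
  have hN' : (0 : ℚ) < N := Nat.cast_pos.2 hN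
  refine ⟨f, ?_, fun i => ?_, fun i hi => ?_⟩
  · exact_mod_cast (show (f v₀ : ℚ) = 0 by rw [hf, hu₀, mul_zero])
  · exact_mod_cast (show (0 : ℚ) ≤ f (v i) by rw [hf]; exact mul_nonneg hN'.le (hu i))
  · exact_mod_cast (show (0 : ℚ) < f (v i) by rw [hf]; exact mul_pos hN' (hu_pos i hi))

/-- A supporting integral linear functional exposing the extremal ray
`ℚ_{≥0} v₀` of a pointed rational polyhedral cone generated by
`v₀, v₁, …, v_m ∈ ℤ^n`: there is a group homomorphism `u : ℤ^n → ℤ` with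
`u(v₀) = 0`, `u(v_i) ≥ 0` for all `i`, and `u(v_i) > 0` whenever
`v_i ∉ ℚ_{≥0}·v₀`. -/
theorem exists_supporting_functional
    (n m : ℕ) (hn : 1 ≤ n)
    (v₀ : Fin n → ℤ) (v : Fin m → Fin n → ℤ)
    (C : Set (Fin n → ℚ))
    (hC : C = {x : Fin n → ℚ | ∃ (c₀ : ℚ) (c : Fin m → ℚ),
      0 ≤ c₀ ∧ (∀ i, 0 ≤ c i) ∧
      x = c₀ • (fun j => ((v₀ j : ℚ))) + ∑ i, c i • fun j => ((v i j : ℚ))})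
    (hpointed : ∀ x ∈ C, -x ∈ C → x = 0)
    (hextremal : ¬ ∃ c : Fin m → ℚ, (∀ i, 0 ≤ c i) ∧
      (fun j => ((v₀ j : ℚ))) = ∑ i, c i • fun j => ((v i j : ℚ))) :
    ∃ u : (Fin n → ℤ) →+ ℤ, u v₀ = 0 ∧ (∀ i, 0 ≤ u (v i)) ∧
      ∀ i, (¬ ∃ q : ℚ, 0 ≤ q ∧
        (fun j => ((v i j : ℚ))) = q • fun j => ((v₀ j : ℚ))) →
        0 < u (v i) :=
  exists_supporting_functional_general n m v₀ v C hC hpointed hextremal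
end

section
/- Consider the action of the two-dimensional torus (ℂˣ)² on ℂ⁷ given by (t₁,t₂) · (z₁,…,z₇) = (t₁z₁, t₁z₂, t₁⁻¹z₃, t₂z₄, t₂z₅, t₁⁻¹t₂⁻¹z₆, t₁⁻¹t₂⁻¹z₇). Let z ∈ ℂ⁷ satisfy z₄ = z₅ = z₆ = z₇ = 0, z₃ ≠ 0, and (z₁, z₂) ≠ (0,0). Then the orbit {(t₁,t₂) · z : t₁, t₂ ∈ ℂˣ} is a closed subset of ℂ⁷ (with its standard topology), and the stabilizer of z equals {(1, t₂) : t₂ ∈ ℂˣ}. (This identifies the closed orbits and stabilizers over the intermediate Luna stratum Z ∖ {0} in the paper's example of a five-dimensional affine toric variety with three Luna strata.) -/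
/-!
On the stratum `z₄ = ⋯ = z₇ = 0` the factor `t₂` acts trivially, so the orbit of
`(a, b, c, 0, 0, 0, 0)` is `{(ta, tb, t⁻¹c, 0, 0, 0, 0)}`. This is exactly the fibre of the
continuous map `w ↦ (w₁w₃, w₂w₃, w₄, w₅, w₆, w₇)` over `(ac, bc, 0, 0, 0, 0)`: a point `w` of
that fibre has `w₃ ≠ 0` because `c ≠ 0` and `(a, b) ≠ 0`, and `t = c / w₃` moves `z` to `w`.
Hence the orbit is closed. The third coordinate `t₁⁻¹c = c` forces `t₁ = 1`, which gives the
stabilizer.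
-/

/-- The action of the torus `(ℂˣ)²` on `ℂ⁷` given by
`(t₁,t₂) · (z₁,…,z₇) = (t₁z₁, t₁z₂, t₁⁻¹z₃, t₂z₄, t₂z₅, t₁⁻¹t₂⁻¹z₆, t₁⁻¹t₂⁻¹z₇)`. -/
def torusAct (t₁ t₂ : ℂˣ) (z : Fin 7 → ℂ) : Fin 7 → ℂ :=
  ![(t₁ : ℂ) * z 0, (t₁ : ℂ) * z 1, ((t₁⁻¹ : ℂˣ) : ℂ) * z 2,
    (t₂ : ℂ) * z 3, (t₂ : ℂ) * z 4,
    ((t₁⁻¹ * t₂⁻¹ : ℂˣ) : ℂ) * z 5, ((t₁⁻¹ * t₂⁻¹ : ℂˣ) : ℂ) * z 6]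

theorem exists_unit_mul_eq_of_mul_eq_mul {K : Type*} [Field K] {a b c x y w : K}
    (hc : c ≠ 0) (hab : ¬(a = 0 ∧ b = 0)) (hx : x * w = a * c) (hy : y * w = b * c) :
    ∃ t : Kˣ, x = t * a ∧ y = t * b ∧ w = ((t⁻¹ : Kˣ) : K) * c := by
  have hw : w ≠ 0 := by
    rintro rfl
    simp_all
  refine ⟨Units.mk0 (c / w) (div_ne_zero hc hw), ?_, ?_, ?_⟩ <;>
    simp only [Units.val_inv_eq_inv_val, Units.val_mk0]
  · field_simp; linear_combination hx
  · field_simp; linear_combination hy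
  · field_simp

def orbitEquations (w : Fin 7 → ℂ) : Fin 6 → ℂ := ![w 0 * w 2, w 1 * w 2, w 3, w 4, w 5, w 6]

theorem continuous_orbitEquations : Continuous orbitEquations := by
  unfold orbitEquations
  fun_prop

theorem torusAct_vecCons_zeros (t₁ t₂ : ℂˣ) (a b c : ℂ) :
    torusAct t₁ t₂ ![a, b, c, 0, 0, 0, 0] =
      ![t₁ * a, t₁ * b, ((t₁⁻¹ : ℂˣ) : ℂ) * c, 0, 0, 0, 0] := by
  simp [torusAct]

theorem orbit_eq_preimage_orbitEquations {a b c : ℂ} (hc : c ≠ 0) (hab : ¬(a = 0 ∧ b = 0)) :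
    {w | ∃ t₁ t₂ : ℂˣ, w = torusAct t₁ t₂ ![a, b, c, 0, 0, 0, 0]} =
      orbitEquations ⁻¹' {![a * c, b * c, 0, 0, 0, 0]} := by
  ext w
  simp only [Set.mem_ofPred_eq, Set.mem_preimage, Set.mem_singleton_iff, torusAct_vecCons_zeros]
  constructor
  · rintro ⟨t₁, t₂, rfl⟩
    ext i
    fin_cases i <;> simp [orbitEquations] <;> field_simp
  · intro hw
    have hw_at (i : Fin 6) := congrFun hw i
    simp only [orbitEquations] at hw_at
    obtain ⟨t, h0, h1, h2⟩ := exists_unit_mul_eq_of_mul_eq_mul hc hab (hw_at 0) (hw_at 1)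
    refine ⟨t, 1, ?_⟩
    ext i
    fin_cases i
    exacts [h0, h1, h2, hw_at 2, hw_at 3, hw_at 4, hw_at 5]

theorem torusAct_eq_self_iff {a b c : ℂ} (hc : c ≠ 0) (t₁ t₂ : ℂˣ) :
    torusAct t₁ t₂ ![a, b, c, 0, 0, 0, 0] = ![a, b, c, 0, 0, 0, 0] ↔ t₁ = 1 := by
  constructor
  · intro h
    simpa [torusAct, hc] using congrFun h 2
  · rintro rfl
    simp [torusAct_vecCons_zeros]

/-- For `z ∈ ℂ⁷` with `z₄ = z₅ = z₆ = z₇ = 0`, `z₃ ≠ 0` and `(z₁,z₂) ≠ (0,0)`,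
the orbit of `z` under the `(ℂˣ)²`-action is closed in `ℂ⁷` and the stabilizer
of `z` equals `{(1, t₂) : t₂ ∈ ℂˣ}`. -/
theorem orbit_closed_and_stabilizer_of_intermediate_stratum
    (z : Fin 7 → ℂ)
    (h4 : z 3 = 0) (h5 : z 4 = 0) (h6 : z 5 = 0) (h7 : z 6 = 0)
    (h3 : z 2 ≠ 0) (h12 : ¬ (z 0 = 0 ∧ z 1 = 0)) :
    IsClosed {w : Fin 7 → ℂ | ∃ t₁ t₂ : ℂˣ, w = torusAct t₁ t₂ z} ∧
    {p : ℂˣ × ℂˣ | torusAct p.1 p.2 z = z} = {p : ℂˣ × ℂˣ | p.1 = 1} := by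
  obtain ⟨a, b, c, rfl⟩ : ∃ a b c : ℂ, z = ![a, b, c, 0, 0, 0, 0] :=
    ⟨z 0, z 1, z 2, by ext i; fin_cases i <;> simp [h4, h5, h6, h7]⟩
  simp only [Matrix.cons_val] at h3 h12
  refine ⟨?_, Set.ext fun p => torusAct_eq_self_iff h3 p.1 p.2⟩
  rw [orbit_eq_preimage_orbitEquations h3 h12]
  exact isClosed_singleton.preimage continuous_orbitEquations
end
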